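/- For every integer n ≥ 2, the sum over all type-B permutation tableaux T of size n of the number of indices k with 2 ≤ k ≤ n such that the (k-1)-th and k-th border steps of T are both west steps equals ((14n-25)/24 + 1/(2n))·|B_n|; equivalently, the expected number of pairs of adjacent west steps in a uniformly random type-B permutation tableau of size n is (14n-25)/24 + 1/(2n). -/

import Mathlib

/-!
Removing the last border step is a bijection between tableaux of size `n + 1` and tableaux of
size `n` together with either a south step (a new empty bottom row) or a new leftmost column.
A new column may carry 1s below its diagonal only in *free* rows, and the number of free rows
evolves explicitly: a south step adds one, and a column with diagonal entry `d` and 1s in the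
rows of `s` leaves `#s + 1` free rows if `d = 1`, and otherwise the rows of `s` together with
the free rows lying above all of them. Summing over the columns gives
`∑ T, x ^ freeCount T = 2 x ∑ T, (x + 1) ^ freeCount T` one size down, hence
`∑ T, x ^ freeCount T = 2ⁿ x (x + 1) ⋯ (x + n - 1)` and `|B_n| = 2ⁿ n!`. A new west step
creates an adjacent pair exactly when the previous step is west, which gives a similar
recursion for `∑ T, adjWest T * x ^ freeCount T`, solved in closed form; `x = 1` gives the
theorem.
-/

/-- A type-B permutation tableau of size `n`, encoded via its border steps and filling.

Border steps are indexed by `Fin n` (index `i` is the `(i+1)`-th step from the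
northeast corner); `west i = true` means the `(i+1)`-th step is a west step
(giving a column) and `west i = false` means it is a south step (giving a row
of the original, unshifted diagram).

Rows of the shifted diagram are also indexed by `Fin n`: a south step `r` indexes
the corresponding original row, and a west step `r` indexes the inserted diagonal
row whose diagonal cell lies in the column of `r`.  The cell in row `r` and the
column of a west step `c` exists iff (`r` is south and `r < c`) or (`r` is west
and `r ≤ c`); in particular the diagonal cell of the column of `c` is `(c, c)`.
Columns are ordered left-to-right by decreasing step index, rows top-to-bottom as:
diagonal rows by decreasing step index, then original rows by increasing step index.

`filling r c = true` means the cell `(r, c)` contains a 1; `filling` is `false`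
outside the cells of the diagram (field `support`).  The fields `col_one`,
`no_bad_zero` and `diag_zero` are the three defining conditions of a type-B
permutation tableau. -/
structure TypeBTableau (n : ℕ) where
  west : Fin n → Bool
  filling : Fin n → Fin n → Bool
  support : ∀ r c : Fin n, filling r c = true →
    west c = true ∧ ((west r = false ∧ (r : ℕ) < (c : ℕ)) ∨ (west r = true ∧ (r : ℕ) ≤ (c : ℕ)))
  col_one : ∀ c : Fin n, west c = true → ∃ r : Fin n, filling r c = true
  no_bad_zero : ∀ r c : Fin n,
    (west c = true ∧ ((west r = false ∧ (r : ℕ) < (c : ℕ)) ∨ (west r = true ∧ (r : ℕ) ≤ (c : ℕ)))) →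
    filling r c = false →
    ¬((∃ r' : Fin n,
        ((west r' = true ∧ west r = false) ∨
         (west r' = true ∧ west r = true ∧ (r : ℕ) < (r' : ℕ)) ∨
         (west r' = false ∧ west r = false ∧ (r' : ℕ) < (r : ℕ))) ∧
        filling r' c = true) ∧
      (∃ c' : Fin n, (c : ℕ) < (c' : ℕ) ∧ filling r c' = true))
  diag_zero : ∀ j : Fin n, west j = true → filling j j = false →
    ∀ c : Fin n, filling j c = false

namespace TypeBTableau

noncomputable instance instFintype {n : ℕ} : Fintype (TypeBTableau n) :=
  Fintype.ofInjective (fun T => (T.west, T.filling)) (by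
    rintro ⟨w1, f1, _, _, _, _⟩ ⟨w2, f2, _, _, _, _⟩ h
    simp only [Prod.mk.injEq] at h
    obtain ⟨h1, h2⟩ := h
    subst h1; subst h2; rfl)

end TypeBTableau

open Finset

/-- The number of pairs of adjacent west steps of a type-B permutation tableau,
i.e. the number of indices `k` with `2 ≤ k ≤ n` such that the `(k-1)`-th and the
`k`-th border steps are both west steps (encoded as pairs of consecutive
step indices that are both west). -/
def TypeBTableau.adjWest {n : ℕ} (T : TypeBTableau n) : ℕ :=
  (Finset.univ.filter (fun p : Fin n × Fin n =>
      (p.1 : ℕ) + 1 = (p.2 : ℕ) ∧ T.west p.1 = true ∧ T.west p.2 = true)).card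

open Polynomial
open scoped Nat

section PowersetSums

variable {α β R : Type*} [CommRing R]

theorem Finset.sum_powerset_pow_card (x : R) (F : Finset α) :
    ∑ s ∈ F.powerset, x ^ #s = (x + 1) ^ #F := by
  simpa using sum_pow_mul_eq_add_pow x 1 F

theorem Finset.sum_powerset_nonempty_pow_card_filter [DecidableEq α] [LinearOrder β]
    {key : α → β} (hkey : key.Injective) (x : R) (F : Finset α) :
    ∑ s ∈ F.powerset with s.Nonempty, x ^ #{r ∈ F | r ∈ s ∨ ∀ r' ∈ s, ¬ key r' < key r} =
      x * (x + 1) ^ #F - x ^ (#F + 1) := by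
  rw [sum_filter]
  induction F using Finset.induction_on_min_value key with
  | empty => simp [filter_singleton]
  | insert t F htF hmin ih =>
    have hlt : ∀ r ∈ F, key t < key r := fun r hr =>
      (hmin r hr).lt_of_ne fun h => htF (hkey h ▸ hr)
    have hwithout : ∀ s ∈ F.powerset, s.Nonempty →
        #{r ∈ insert t F | r ∈ s ∨ ∀ r' ∈ s, ¬ key r' < key r} =
          #{r ∈ F | r ∈ s ∨ ∀ r' ∈ s, ¬ key r' < key r} + 1 := by
      intro s hs _
      have ht : ∀ r' ∈ s, ¬ key r' < key t := fun r' hr' =>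
        not_lt.mpr (hlt r' (mem_powerset.mp hs hr')).le
      rw [filter_insert, if_pos (Or.inr ht), card_insert_of_notMem (by simp [htF])]
    have hwith : ∀ s ∈ F.powerset,
        {r ∈ insert t F | r ∈ insert t s ∨ ∀ r' ∈ insert t s, ¬ key r' < key r} = insert t s := by
      intro s hs
      ext r
      simp only [mem_filter, mem_insert]
      constructor
      · rintro ⟨rfl | hr, hrs | hmin'⟩
        · exact hrs
        · exact Or.inl rfl
        · exact hrs
        · exact absurd (hlt r hr) (hmin' t (Or.inl rfl))
      · rintro (rfl | hrs)
        · exact ⟨Or.inl rfl, Or.inl (Or.inl rfl)⟩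
        · exact ⟨Or.inr (mem_powerset.mp hs hrs), Or.inl (Or.inr hrs)⟩
    rw [sum_powerset_insert htF]
    calc _ = x * ∑ s ∈ F.powerset, (if s.Nonempty then
              x ^ #{r ∈ F | r ∈ s ∨ ∀ r' ∈ s, ¬ key r' < key r} else 0) +
            x * ∑ s ∈ F.powerset, x ^ #s := by
          rw [mul_sum, mul_sum]
          congr 1
          · refine sum_congr rfl fun s hs => ?_
            split_ifs with hne
            · rw [hwithout s hs hne, pow_succ, mul_comm]
            · rw [mul_zero]
          · refine sum_congr rfl fun s hs => ?_
            rw [if_pos (insert_nonempty t s), hwith s hs,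
              card_insert_of_notMem fun h => htF (mem_powerset.mp hs h), pow_succ, mul_comm]
      _ = _ := by
          rw [ih, sum_powerset_pow_card, card_insert_of_notMem htF]
          ring

end PowersetSums

theorem ascPochhammer_succ_eval_left {S : Type*} [CommSemiring S] (n : ℕ) (x : S) :
    (ascPochhammer S (n + 1)).eval x = x * (ascPochhammer S n).eval (x + 1) := by
  simp [ascPochhammer_succ_left, eval_comp]

namespace TypeBTableau

variable {n : ℕ}

@[ext]
theorem ext {T₁ T₂ : TypeBTableau n} (hw : T₁.west = T₂.west) (hf : T₁.filling = T₂.filling) :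
    T₁ = T₂ := by
  cases T₁; cases T₂; simp_all

def IsCell (T : TypeBTableau n) (r c : Fin n) : Prop :=
  T.west c = true ∧
    ((T.west r = false ∧ (r : ℕ) < (c : ℕ)) ∨ (T.west r = true ∧ (r : ℕ) ≤ (c : ℕ)))

def Above (T : TypeBTableau n) (r' r : Fin n) : Prop :=
  (T.west r' = true ∧ T.west r = false) ∨
  (T.west r' = true ∧ T.west r = true ∧ (r : ℕ) < (r' : ℕ)) ∨
  (T.west r' = false ∧ T.west r = false ∧ (r' : ℕ) < (r : ℕ))

instance (T : TypeBTableau n) : DecidableRel T.Above := fun _ _ => by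
  unfold Above; infer_instance

/-- The rows that may receive a 1 in a new leftmost column: a diagonal row whose diagonal
cell holds a 1, or an original row, such that no 0 of the row has a 1 above it. -/
def Free (T : TypeBTableau n) (r : Fin n) : Prop :=
  (T.west r = true → T.filling r r = true) ∧
    ∀ c, T.IsCell r c → T.filling r c = false → ∀ r', T.Above r' r → T.filling r' c = false

noncomputable instance (T : TypeBTableau n) : DecidablePred T.Free := Classical.decPred _

noncomputable def freeRows (T : TypeBTableau n) : Finset (Fin n) :=
  univ.filter T.Free

noncomputable def freeCount (T : TypeBTableau n) : ℕ :=
  #T.freeRows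

theorem mem_freeRows {T : TypeBTableau n} {r : Fin n} : r ∈ T.freeRows ↔ T.Free r := by
  simp [freeRows]

def addSouth (T : TypeBTableau n) : TypeBTableau (n + 1) where
  west := Fin.snoc T.west false
  filling r c := Fin.lastCases false (fun r => Fin.lastCases false (T.filling r) c) r
  support r c h := by
    induction r using Fin.lastCases with
    | last => simp at h
    | cast r =>
      induction c using Fin.lastCases with
      | last => simp at h
      | cast c => simpa using T.support r c (by simpa using h)
  col_one c hc := by
    induction c using Fin.lastCases with
    | last => simp at hc
    | cast c =>
      obtain ⟨r, hr⟩ := T.col_one c (by simpa using hc)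
      exact ⟨r.castSucc, by simpa using hr⟩
  no_bad_zero r c hcell h0 := by
    rintro ⟨⟨r', hr'c, hr'⟩, ⟨c', hcc', hc'⟩⟩
    induction c using Fin.lastCases with
    | last => simp at hcell
    | cast c =>
    induction r using Fin.lastCases with
    | last => simp at hcell; omega
    | cast r =>
    induction r' using Fin.lastCases with
    | last => simp at hr'
    | cast r' =>
    induction c' using Fin.lastCases with
    | last => simp at hc'
    | cast c' =>
    simp only [Fin.snoc_castSucc, Fin.val_castSucc, Fin.lastCases_castSucc] at *
    exact T.no_bad_zero r c hcell h0 ⟨⟨r', hr'c, hr'⟩, ⟨c', hcc', hc'⟩⟩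
  diag_zero j hj hjj c := by
    induction j using Fin.lastCases with
    | last => simp at hj
    | cast j =>
      induction c using Fin.lastCases with
      | last => simp
      | cast c => simpa using T.diag_zero j (by simpa using hj) (by simpa using hjj) c

noncomputable def westExtensions (T : TypeBTableau n) : Finset (Bool × Finset (Fin n)) :=
  {p ∈ univ ×ˢ T.freeRows.powerset | p.1 = true ∨ p.2.Nonempty}

theorem mem_westExtensions {T : TypeBTableau n} {p : Bool × Finset (Fin n)} :
    p ∈ T.westExtensions ↔ p.2 ⊆ T.freeRows ∧ (p.1 = true ∨ p.2.Nonempty) := by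
  simp [westExtensions]

/-- Append a west step: a new leftmost column with diagonal entry `p.1` and, below the
diagonal, 1s exactly in the rows of `p.2`. -/
def addWest (T : TypeBTableau n) (p : Bool × Finset (Fin n)) (hp : p ∈ T.westExtensions) :
    TypeBTableau (n + 1) where
  west := Fin.snoc T.west true
  filling r c :=
    Fin.lastCases ((Fin.snoc (fun r => decide (r ∈ p.2)) p.1 : Fin (n + 1) → Bool) r)
      (fun c => Fin.lastCases false (fun r => T.filling r c) r) c
  support r c h := by
    induction c using Fin.lastCases with
    | last =>
      induction r using Fin.lastCases with
      | last => simp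
      | cast r => cases hw : T.west r <;> simp [hw, Nat.le_of_lt r.isLt]
    | cast c =>
      induction r using Fin.lastCases with
      | last => simp at h
      | cast r => simpa using T.support r c (by simpa using h)
  col_one c hc := by
    induction c using Fin.lastCases with
    | last =>
      rcases (mem_westExtensions.mp hp).2 with hd | ⟨r, hr⟩
      · exact ⟨Fin.last n, by simpa using hd⟩
      · exact ⟨r.castSucc, by simpa using hr⟩
    | cast c =>
      obtain ⟨r, hr⟩ := T.col_one c (by simpa using hc)
      exact ⟨r.castSucc, by simpa using hr⟩
  no_bad_zero r c hcell h0 := by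
    rintro ⟨⟨r', hr'c, hr'⟩, ⟨c', hcc', hc'⟩⟩
    induction c using Fin.lastCases with
    | last => simp at hcc'; omega
    | cast c =>
    induction r using Fin.lastCases with
    | last => simp at hcell; omega
    | cast r =>
    induction r' using Fin.lastCases with
    | last => simp at hr'
    | cast r' =>
    simp only [Fin.snoc_castSucc, Fin.val_castSucc, Fin.lastCases_castSucc] at *
    induction c' using Fin.lastCases with
    | last =>
      -- the 1 to the left lies in the new column, so row `r` is free
      simp only [Fin.lastCases_last, decide_eq_true_eq] at hc'
      have := (mem_freeRows.mp ((mem_westExtensions.mp hp).1 hc')).2 c hcell h0 r' hr'c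
      simp [this] at hr'
    | cast c' =>
      simp only [Fin.lastCases_castSucc, Fin.val_castSucc] at hc' hcc'
      exact T.no_bad_zero r c hcell h0 ⟨⟨r', hr'c, hr'⟩, ⟨c', hcc', hc'⟩⟩
  diag_zero j hj hjj c := by
    induction j using Fin.lastCases with
    | last =>
      induction c using Fin.lastCases with
      | last => simpa using hjj
      | cast c => simp
    | cast j =>
      simp only [Fin.snoc_castSucc, Fin.lastCases_castSucc] at hj hjj
      induction c using Fin.lastCases with
      | last =>
        have hjs : j ∉ p.2 := fun hjs => by
          simp [(mem_freeRows.mp ((mem_westExtensions.mp hp).1 hjs)).1 hj] at hjj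
        simpa using hjs
      | cast c => simpa using T.diag_zero j hj hjj c

def dropLast (T : TypeBTableau (n + 1)) : TypeBTableau n where
  west r := T.west r.castSucc
  filling r c := T.filling r.castSucc c.castSucc
  support r c h := by simpa using T.support r.castSucc c.castSucc h
  col_one c hc := by
    obtain ⟨r, hr⟩ := T.col_one c.castSucc hc
    induction r using Fin.lastCases with
    | last => have := T.support _ _ hr; simp at this; omega
    | cast r => exact ⟨r, hr⟩
  no_bad_zero r c hcell h0 := by
    rintro ⟨⟨r', hr'c, hr'⟩, ⟨c', hcc', hc'⟩⟩
    exact T.no_bad_zero r.castSucc c.castSucc (by simpa using hcell) h0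
      ⟨⟨r'.castSucc, by simpa using hr'c, hr'⟩, ⟨c'.castSucc, by simpa using hcc', hc'⟩⟩
  diag_zero j hj hjj c := T.diag_zero j.castSucc hj hjj c.castSucc

section simpLemmas

variable (T : TypeBTableau n) (r c : Fin n)

@[simp] theorem addSouth_west_castSucc : T.addSouth.west r.castSucc = T.west r := by
  simp [addSouth]
@[simp] theorem addSouth_west_last : T.addSouth.west (Fin.last n) = false := by simp [addSouth]
@[simp] theorem addSouth_filling_castSucc :
    T.addSouth.filling r.castSucc c.castSucc = T.filling r c := by simp [addSouth]
@[simp] theorem addSouth_filling_last (c : Fin (n + 1)) :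
    T.addSouth.filling (Fin.last n) c = false := by simp [addSouth]

variable {p : Bool × Finset (Fin n)} (hp : p ∈ T.westExtensions)

@[simp] theorem addWest_west_castSucc : (T.addWest p hp).west r.castSucc = T.west r := by
  simp [addWest]
@[simp] theorem addWest_west_last : (T.addWest p hp).west (Fin.last n) = true := by
  simp [addWest]
@[simp] theorem addWest_filling_castSucc :
    (T.addWest p hp).filling r.castSucc c.castSucc = T.filling r c := by simp [addWest]
@[simp] theorem addWest_filling_castSucc_last :
    (T.addWest p hp).filling r.castSucc (Fin.last n) = decide (r ∈ p.2) := by simp [addWest]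
@[simp] theorem addWest_filling_last_castSucc :
    (T.addWest p hp).filling (Fin.last n) c.castSucc = false := by simp [addWest]
@[simp] theorem addWest_filling_last_last :
    (T.addWest p hp).filling (Fin.last n) (Fin.last n) = p.1 := by simp [addWest]

end simpLemmas

@[simp] theorem dropLast_west (T : TypeBTableau (n + 1)) (r : Fin n) :
    T.dropLast.west r = T.west r.castSucc := rfl
@[simp] theorem dropLast_filling (T : TypeBTableau (n + 1)) (r c : Fin n) :
    T.dropLast.filling r c = T.filling r.castSucc c.castSucc := rfl

@[simp] theorem dropLast_addSouth (T : TypeBTableau n) : T.addSouth.dropLast = T := by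
  ext <;> simp

@[simp] theorem dropLast_addWest (T : TypeBTableau n) {p} (hp : p ∈ T.westExtensions) :
    (T.addWest p hp).dropLast = T := by
  ext <;> simp

theorem addSouth_dropLast (T : TypeBTableau (n + 1)) (h : T.west (Fin.last n) = false) :
    T.dropLast.addSouth = T := by
  refine ext (funext fun r => ?_) (funext₂ fun r c => ?_)
  · induction r using Fin.lastCases <;> simp [h]
  · induction c using Fin.lastCases with
    | last =>
      cases hf : T.filling r (Fin.last n)
      · induction r using Fin.lastCases <;> simp [addSouth]
      · simp [T.support _ _ hf |>.1] at h
    | cast c =>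
      induction r using Fin.lastCases with
      | cast r => simp
      | last =>
        cases hf : T.filling (Fin.last n) c.castSucc
        · simp [addSouth]
        · have := T.support _ _ hf; simp [h] at this; omega

theorem free_dropLast_of_filling_last {T : TypeBTableau (n + 1)} {r : Fin n}
    (hr : T.filling r.castSucc (Fin.last n) = true) : T.dropLast.Free r := by
  refine ⟨fun hw => ?_, fun c hcell h0 r' hr'r => ?_⟩
  · by_contra hd
    simp [T.diag_zero r.castSucc hw (by simpa using hd) (Fin.last n)] at hr
  · by_contra h1
    exact T.no_bad_zero r.castSucc c.castSucc (by simpa [IsCell] using hcell) h0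
      ⟨⟨r'.castSucc, by simpa [Above] using hr'r, by simpa using h1⟩,
        ⟨Fin.last n, by simp, hr⟩⟩

def lastColumn (T : TypeBTableau (n + 1)) : Bool × Finset (Fin n) :=
  (T.filling (Fin.last n) (Fin.last n),
    univ.filter fun r => T.filling r.castSucc (Fin.last n) = true)

theorem lastColumn_mem_westExtensions (T : TypeBTableau (n + 1))
    (h : T.west (Fin.last n) = true) : T.lastColumn ∈ T.dropLast.westExtensions := by
  refine mem_westExtensions.mpr ⟨fun r hr => ?_, ?_⟩
  · simp only [lastColumn, mem_filter, mem_univ, true_and] at hr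
    exact mem_freeRows.mpr (free_dropLast_of_filling_last hr)
  · obtain ⟨r, hr⟩ := T.col_one (Fin.last n) h
    induction r using Fin.lastCases with
    | last => exact Or.inl hr
    | cast r => exact Or.inr ⟨r, by simpa [lastColumn] using hr⟩

theorem addWest_dropLast (T : TypeBTableau (n + 1)) (h : T.west (Fin.last n) = true) :
    T.dropLast.addWest T.lastColumn (T.lastColumn_mem_westExtensions h) = T := by
  refine ext (funext fun r => ?_) (funext₂ fun r c => ?_)
  · induction r using Fin.lastCases <;> simp [h]
  · induction c using Fin.lastCases with
    | last =>
      induction r using Fin.lastCases with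
      | last => simp [lastColumn]
      | cast r => cases hf : T.filling r.castSucc (Fin.last n) <;> simp [lastColumn, hf]
    | cast c =>
      induction r using Fin.lastCases with
      | cast r => simp
      | last =>
        cases hf : T.filling (Fin.last n) c.castSucc
        · simp [addWest]
        · have := T.support _ _ hf; simp [h] at this; omega

noncomputable def extend : (Σ T : TypeBTableau n, Option T.westExtensions) → TypeBTableau (n + 1)
  | ⟨T, none⟩ => T.addSouth
  | ⟨T, some p⟩ => T.addWest p.1 p.2

theorem extend_bijective : Function.Bijective (extend (n := n)) := by
  refine ⟨?_, fun T => ?_⟩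
  · rintro ⟨T₁, _ | p₁⟩ ⟨T₂, _ | p₂⟩ h
    · obtain rfl : T₁ = T₂ := by simpa [extend] using congrArg dropLast h
      rfl
    · simpa [extend] using congrArg (·.west (Fin.last n)) h
    · simpa [extend] using congrArg (·.west (Fin.last n)) h
    · obtain rfl : T₁ = T₂ := by simpa [extend] using congrArg dropLast h
      simpa [extend, lastColumn] using congrArg lastColumn h
  · cases h : T.west (Fin.last n)
    · exact ⟨⟨T.dropLast, none⟩, T.addSouth_dropLast h⟩
    · exact ⟨⟨T.dropLast, some ⟨_, T.lastColumn_mem_westExtensions h⟩⟩, T.addWest_dropLast h⟩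

theorem sum_succ {M : Type*} [AddCommMonoid M] (F : TypeBTableau (n + 1) → M) :
    ∑ T, F T =
      ∑ T : TypeBTableau n, (F T.addSouth + ∑ p : T.westExtensions, F (T.addWest p.1 p.2)) := by
  rw [← Fintype.sum_bijective extend extend_bijective _ F (fun _ => rfl), ← univ_sigma_univ,
    sum_sigma]
  exact Fintype.sum_congr _ _ fun T => Fintype.sum_option _

theorem freeCount_succ (T : TypeBTableau (n + 1)) :
    T.freeCount = #{r : Fin n | T.Free r.castSucc} + if T.Free (Fin.last n) then 1 else 0 := by
  rw [freeCount, freeRows, card_filter, card_filter, Fin.sum_univ_castSucc]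

theorem Free.dropLast {T : TypeBTableau (n + 1)} {r : Fin n} (h : T.Free r.castSucc) :
    T.dropLast.Free r :=
  ⟨h.1, fun c hcell h0 r' hr'r => h.2 c.castSucc (by simpa [IsCell] using hcell) h0 r'.castSucc
    (by simpa [Above] using hr'r)⟩

theorem free_addSouth_castSucc (T : TypeBTableau n) (r : Fin n) :
    T.addSouth.Free r.castSucc ↔ T.Free r := by
  refine ⟨fun h => by simpa using h.dropLast, fun ⟨hd, hr⟩ => ⟨by simpa using hd, ?_⟩⟩
  intro c hcell h0 r' hr'r
  induction c using Fin.lastCases with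
  | last => simp [IsCell] at hcell
  | cast c =>
  induction r' using Fin.lastCases with
  | last => simp
  | cast r' =>
    simpa using hr c (by simpa [IsCell] using hcell) (by simpa using h0) r'
      (by simpa [Above] using hr'r)

theorem free_addSouth_last (T : TypeBTableau n) : T.addSouth.Free (Fin.last n) :=
  ⟨by simp, fun c hcell => by simp [IsCell] at hcell; omega⟩

theorem freeCount_addSouth (T : TypeBTableau n) : T.addSouth.freeCount = T.freeCount + 1 := by
  rw [freeCount_succ, if_pos T.free_addSouth_last]
  simp only [free_addSouth_castSucc, freeCount, freeRows]

theorem free_addWest_castSucc (T : TypeBTableau n) {p : Bool × Finset (Fin n)}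
    (hp : p ∈ T.westExtensions) (r : Fin n) :
    (T.addWest p hp).Free r.castSucc ↔
      T.Free r ∧ (r ∈ p.2 ∨ p.1 = false ∧ ∀ r' ∈ p.2, ¬ T.Above r' r) := by
  constructor
  · intro h
    refine ⟨by simpa using h.dropLast, or_iff_not_imp_left.mpr fun hrs => ?_⟩
    have hcell : (T.addWest p hp).IsCell r.castSucc (Fin.last n) := by
      cases hw : T.west r <;> simp [IsCell, hw]
    have hlast := h.2 (Fin.last n) hcell (by simpa using hrs)
    have habove : (T.addWest p hp).Above (Fin.last n) r.castSucc := by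
      cases hw : T.west r <;> simp [Above, hw]
    refine ⟨by simpa using hlast (Fin.last n) habove, fun r' hr' hr'r => ?_⟩
    simpa [hr'] using hlast r'.castSucc (by simpa [Above] using hr'r)
  · rintro ⟨⟨hd, hr⟩, hcond⟩
    refine ⟨by simpa using hd, fun c hcell h0 r' hr'r => ?_⟩
    induction c using Fin.lastCases with
    | last =>
      obtain ⟨hdiag, hs⟩ := hcond.resolve_left (by simpa using h0)
      induction r' using Fin.lastCases with
      | last => simpa using hdiag
      | cast r' => simpa using fun h => hs r' h (by simpa [Above] using hr'r)
    | cast c =>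
      induction r' using Fin.lastCases with
      | last => simp
      | cast r' =>
        simpa using hr c (by simpa [IsCell] using hcell) (by simpa using h0) r'
          (by simpa [Above] using hr'r)

theorem free_addWest_last (T : TypeBTableau n) {p : Bool × Finset (Fin n)}
    (hp : p ∈ T.westExtensions) : (T.addWest p hp).Free (Fin.last n) ↔ p.1 = true := by
  refine ⟨fun h => by simpa using h.1 (by simp), fun hd => ⟨by simp [hd], ?_⟩⟩
  intro c _ _ r' hr'
  simp [Above] at hr'
  omega

theorem freeCount_addWest (T : TypeBTableau n) {p : Bool × Finset (Fin n)}
    (hp : p ∈ T.westExtensions) :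
    (T.addWest p hp).freeCount =
      #{r ∈ T.freeRows | r ∈ p.2 ∨ p.1 = false ∧ ∀ r' ∈ p.2, ¬ T.Above r' r} +
        if p.1 = true then 1 else 0 := by
  simp only [freeCount_succ, free_addWest_castSucc, free_addWest_last, freeRows, filter_filter]

/-- The position of row `r` counted from the top of the shifted diagram. -/
def rowRank (T : TypeBTableau n) (r : Fin n) : ℕ :=
  if T.west r = true then n - 1 - r else n + r

theorem above_iff_rowRank_lt {T : TypeBTableau n} {r' r : Fin n} :
    T.Above r' r ↔ T.rowRank r' < T.rowRank r := by
  have := r.isLt; have := r'.isLt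
  cases h' : T.west r' <;> cases h : T.west r <;> simp [Above, rowRank, h', h] <;> omega

theorem rowRank_injective (T : TypeBTableau n) : T.rowRank.Injective := by
  intro a b h
  have := a.isLt; have := b.isLt
  cases ha : T.west a <;> cases hb : T.west b <;> simp [rowRank, ha, hb] at h <;> omega

theorem sum_pow_freeCount_addWest {R : Type*} [CommRing R] (T : TypeBTableau n) (x : R) :
    ∑ p : T.westExtensions, x ^ (T.addWest p.1 p.2).freeCount =
      2 * x * (x + 1) ^ T.freeCount - x ^ (T.freeCount + 1) := by
  simp_rw [freeCount_addWest]
  rw [sum_coe_sort T.westExtensions fun p => x ^ (#{r ∈ T.freeRows |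
      r ∈ p.2 ∨ p.1 = false ∧ ∀ r' ∈ p.2, ¬ T.Above r' r} + if p.1 = true then 1 else 0)]
  rw [westExtensions, sum_filter, sum_product, Fintype.sum_bool]
  simp only [true_or, if_true, Bool.true_eq_false, false_and, or_false, Bool.false_eq_true,
    false_or, true_and, if_false, add_zero, above_iff_rowRank_lt]
  have hdiag_one : ∑ s ∈ T.freeRows.powerset, x ^ (#{r ∈ T.freeRows | r ∈ s} + 1) =
      x * (x + 1) ^ T.freeCount := by
    rw [freeCount, ← sum_powerset_pow_card, mul_sum]
    refine sum_congr rfl fun s hs => ?_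
    rw [filter_mem_eq_inter, inter_eq_right.mpr (mem_powerset.mp hs), pow_succ, mul_comm]
  have hdiag_zero := sum_powerset_nonempty_pow_card_filter T.rowRank_injective x T.freeRows
  rw [← freeCount] at hdiag_zero
  rw [hdiag_one, ← sum_filter, show 2 * x * (x + 1) ^ T.freeCount - x ^ (T.freeCount + 1) =
    x * (x + 1) ^ T.freeCount + (x * (x + 1) ^ T.freeCount - x ^ (T.freeCount + 1)) by ring]
  -- `convert` reconciles the two decidability instances of the filter
  convert congrArg (x * (x + 1) ^ T.freeCount + ·) hdiag_zero

theorem adjWest_eq_card (T : TypeBTableau (n + 1)) :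
    T.adjWest = #{i : Fin n | T.west i.castSucc = true ∧ T.west i.succ = true} := by
  refine (card_nbij (fun i => (i.castSucc, i.succ)) (fun i hi => by simp_all)
    (fun i _ j _ h => Fin.castSucc_injective _ (Prod.ext_iff.mp h).1) (fun p hp => ?_)).symm
  obtain ⟨hadj, h1, h2⟩ := (mem_filter.mp hp).2
  exact ⟨⟨p.1, by omega⟩, by simp [hadj, h1, h2]⟩

theorem adjWest_succ (T : TypeBTableau (n + 2)) :
    T.adjWest = T.dropLast.adjWest +
      if T.west (Fin.last n).castSucc = true ∧ T.west (Fin.last (n + 1)) = true then 1 else 0 := by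
  rw [adjWest_eq_card, adjWest_eq_card, card_filter, card_filter, Fin.sum_univ_castSucc]
  simp only [dropLast_west, Fin.succ_castSucc, Fin.succ_last]
  rfl

@[simp] theorem adjWest_addSouth (T : TypeBTableau (n + 1)) : T.addSouth.adjWest = T.adjWest := by
  simp [adjWest_succ T.addSouth]

theorem adjWest_addWest (T : TypeBTableau (n + 1)) {p : Bool × Finset (Fin (n + 1))}
    (hp : p ∈ T.westExtensions) :
    (T.addWest p hp).adjWest = T.adjWest + if T.west (Fin.last n) = true then 1 else 0 := by
  simp [adjWest_succ (T.addWest p hp)]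

instance : Unique (TypeBTableau 0) where
  default := ⟨Fin.elim0, Fin.elim0, fun r => r.elim0, fun c => c.elim0, fun r => r.elim0,
    fun j => j.elim0⟩
  uniq _ := ext (funext fun r => r.elim0) (funext fun r => r.elim0)

noncomputable def freeGF (n : ℕ) (x : ℝ) : ℝ :=
  ∑ T : TypeBTableau n, x ^ T.freeCount

noncomputable def westEndGF (n : ℕ) (x : ℝ) : ℝ :=
  ∑ T : TypeBTableau (n + 1), if T.west (Fin.last n) = true then x ^ T.freeCount else 0

noncomputable def adjWestGF (n : ℕ) (x : ℝ) : ℝ :=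
  ∑ T : TypeBTableau n, T.adjWest * x ^ T.freeCount

theorem freeGF_zero (x : ℝ) : freeGF 0 x = 1 := by
  simp [freeGF, freeCount, freeRows, univ_eq_empty]

theorem freeGF_succ (n : ℕ) (x : ℝ) : freeGF (n + 1) x = 2 * x * freeGF n (x + 1) := by
  rw [freeGF, sum_succ, freeGF, mul_sum]
  refine sum_congr rfl fun T _ => ?_
  rw [freeCount_addSouth, sum_pow_freeCount_addWest]
  ring

theorem adjWestGF_one (x : ℝ) : adjWestGF 1 x = 0 := by
  simp [adjWestGF, adjWest_eq_card]

theorem adjWestGF_succ_succ (n : ℕ) (x : ℝ) :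
    adjWestGF (n + 2) x =
      2 * x * adjWestGF (n + 1) (x + 1) + 2 * x * westEndGF n (x + 1) - x * westEndGF n x := by
  rw [adjWestGF, sum_succ, adjWestGF, westEndGF, westEndGF, mul_sum, mul_sum, mul_sum,
    ← sum_add_distrib, ← sum_sub_distrib]
  refine sum_congr rfl fun T _ => ?_
  simp only [adjWest_addSouth, adjWest_addWest, freeCount_addSouth, Nat.cast_add, add_mul,
    sum_add_distrib, ← mul_sum, sum_pow_freeCount_addWest]
  split_ifs <;> push_cast <;> ring

theorem freeGF_eq (n : ℕ) (x : ℝ) : freeGF n x = 2 ^ n * (ascPochhammer ℝ n).eval x := by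
  induction n generalizing x with
  | zero => simp [freeGF_zero]
  | succ n ih =>
    rw [freeGF_succ, ih, ascPochhammer_succ_eval_left]
    ring

theorem card_eq (n : ℕ) : Fintype.card (TypeBTableau n) = 2 ^ n * n ! := by
  have h : (Fintype.card (TypeBTableau n) : ℝ) = freeGF n 1 := by simp [freeGF]
  rw [freeGF_eq, ascPochhammer_eval_one] at h
  exact_mod_cast h

theorem westEndGF_eq (n : ℕ) (x : ℝ) :
    westEndGF n x =
      2 ^ n * (2 * (ascPochhammer ℝ (n + 1)).eval x - x * (ascPochhammer ℝ n).eval x) := by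
  suffices westEndGF n x = 2 * x * freeGF n (x + 1) - x * freeGF n x by
    rw [this, freeGF_eq, freeGF_eq, ascPochhammer_succ_eval_left]
    ring
  rw [westEndGF, sum_succ, freeGF, freeGF, mul_sum, mul_sum, ← sum_sub_distrib]
  refine sum_congr rfl fun T _ => ?_
  simp only [addSouth_west_last, addWest_west_last, Bool.false_eq_true, if_false, if_true,
    zero_add, sum_pow_freeCount_addWest]
  ring

theorem adjWestGF_eq (m : ℕ) (x : ℝ) :
    adjWestGF (m + 2) x = 2 ^ m * (ascPochhammer ℝ m).eval x * (m + 1) *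
      ((x + m) * (x + m + 1) + (m + 1) * (x + m) + m * (2 * m + 1) / 6) := by
  induction m generalizing x with
  | zero =>
    rw [adjWestGF_succ_succ, adjWestGF_one, westEndGF_eq, westEndGF_eq]
    simp only [zero_add, ascPochhammer_zero, ascPochhammer_one, eval_one, eval_X, Nat.cast_zero]
    ring
  | succ m ih =>
    rw [adjWestGF_succ_succ, ih, westEndGF_eq, westEndGF_eq, ascPochhammer_succ_eval_left (m + 1) x,
      ascPochhammer_succ_eval_left m x]
    simp only [ascPochhammer_succ_eval]
    push_cast
    ring

end TypeBTableau

/-- The total number of pairs of adjacent west steps over all type-B permutation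
tableaux of size `n` equals `((14n-25)/24 + 1/(2n)) · |B_n|`; i.e. the expected
number of pairs of adjacent west steps in a uniformly random type-B permutation
tableau of size `n` is `(14n-25)/24 + 1/(2n)`. -/
theorem expected_number_adjacent_west_steps (n : ℕ) (hn : 2 ≤ n) :
    (∑ T : TypeBTableau n, (T.adjWest : ℝ)) =
      ((14 * (n : ℝ) - 25) / 24 + 1 / (2 * (n : ℝ))) * (Fintype.card (TypeBTableau n) : ℝ) := by
  obtain ⟨m, rfl⟩ : ∃ m, n = m + 2 := ⟨n - 2, by omega⟩
  have hsum : ∑ T : TypeBTableau (m + 2), (T.adjWest : ℝ) = TypeBTableau.adjWestGF (m + 2) 1 := by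
    simp [TypeBTableau.adjWestGF]
  rw [hsum, TypeBTableau.adjWestGF_eq, ascPochhammer_eval_one, TypeBTableau.card_eq]
  push_cast [Nat.factorial_succ]
  field_simp
  ring
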